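/- arXiv:2312.17031 — 4 statements merged into one kernel-verified Lean document; each statement's English description precedes it below -/
import Mathlib

section
/- Let B̂, B, M be finite sets of pixels (finite subsets of ℤ × ℤ) with M ⊆ B, M nonempty, and B̂ nonempty. Define GmaIoU(B̂, P, M) = (|P| / |M|) · (|B̂ ∩ M| / |B̂ ∪ P|) for a finite set P, where |·| denotes cardinality and the ratios are taken in ℝ. Then GmaIoU(B̂, B, M) ≥ GmaIoU(B̂, M, M), i.e., (|B| / |M|) · (|B̂ ∩ M| / |B̂ ∪ B|) ≥ |B̂ ∩ M| / |B̂ ∪ M|. -/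
open Finset

/-- `GmaIoU B̂ P M = (|P| / |M|) · (|B̂ ∩ M| / |B̂ ∪ P|)`, as a real number. -/
noncomputable def GmaIoU (Bhat P M : Finset (ℤ × ℤ)) : ℝ :=
  ((P.card : ℝ) / (M.card : ℝ)) * (((Bhat ∩ M).card : ℝ) / ((Bhat ∪ P).card : ℝ))

/-- Corollary 1: `GmaIoU(B̂, B, M) ≥ GmaIoU(B̂, M, M)`, i.e.
`(|B| / |M|) · (|B̂ ∩ M| / |B̂ ∪ B|) ≥ |B̂ ∩ M| / |B̂ ∪ M|`. -/
theorem gmaIoU_box_ge_gmaIoU_mask (Bhat B M : Finset (ℤ × ℤ))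
    (hMB : M ⊆ B) (hM : M.Nonempty) (hBhat : Bhat.Nonempty) :
    GmaIoU Bhat B M ≥ GmaIoU Bhat M M ∧
    ((B.card : ℝ) / (M.card : ℝ)) * (((Bhat ∩ M).card : ℝ) / ((Bhat ∪ B).card : ℝ)) ≥
      ((Bhat ∩ M).card : ℝ) / ((Bhat ∪ M).card : ℝ) := by
  have h1 := Finset.card_union_add_card_inter Bhat B
  have h2 := Finset.card_union_add_card_inter Bhat M
  have h3 : (Bhat ∩ M).card ≤ (Bhat ∩ B).card :=
    Finset.card_le_card (Finset.inter_subset_inter_left hMB)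
  have h4 : (Bhat ∩ M).card ≤ Bhat.card :=
    Finset.card_le_card (Finset.inter_subset_left)
  have h5 : M.card ≤ B.card := Finset.card_le_card hMB
  have hm : 0 < M.card := Finset.card_pos.mpr hM
  have hu : 0 < (Bhat ∪ B).card :=
    Finset.card_pos.mpr (hBhat.mono Finset.subset_union_left)
  have hv : 0 < (Bhat ∪ M).card :=
    Finset.card_pos.mpr (hBhat.mono Finset.subset_union_left)
  have key : ((Bhat ∩ M).card : ℝ) / ((Bhat ∪ M).card : ℝ) ≤
      ((B.card : ℝ) / (M.card : ℝ)) * (((Bhat ∩ M).card : ℝ) / ((Bhat ∪ B).card : ℝ)) := by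
    rw [div_mul_div_comm, div_le_div_iff₀ (by positivity) (by positivity)]
    have h1' : ((Bhat ∪ B).card : ℝ) + ((Bhat ∩ B).card : ℝ) = Bhat.card + B.card := by
      exact_mod_cast h1
    have h2' : ((Bhat ∪ M).card : ℝ) + ((Bhat ∩ M).card : ℝ) = Bhat.card + M.card := by
      exact_mod_cast h2
    have h3' : ((Bhat ∩ M).card : ℝ) ≤ (Bhat ∩ B).card := by exact_mod_cast h3
    have h4' : ((Bhat ∩ M).card : ℝ) ≤ Bhat.card := by exact_mod_cast h4
    have h5' : ((M.card : ℝ)) ≤ B.card := by exact_mod_cast h5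
    have hx : (0:ℝ) ≤ ((Bhat ∩ M).card : ℝ) := by positivity
    have hm' : (0:ℝ) < M.card := by exact_mod_cast hm
    have eu : ((Bhat ∪ B).card : ℝ) = Bhat.card + B.card - (Bhat ∩ B).card := by linarith
    have ev : ((Bhat ∪ M).card : ℝ) = Bhat.card + M.card - (Bhat ∩ M).card := by linarith
    rw [eu, ev]
    nlinarith [mul_nonneg hx (mul_nonneg (sub_nonneg.mpr h5') (sub_nonneg.mpr h4')),
      mul_nonneg hx (mul_nonneg hm'.le (sub_nonneg.mpr h3'))]
  refine ⟨?_, key⟩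
  unfold GmaIoU
  have : ((M.card : ℝ)) / (M.card : ℝ) = 1 := by
    rw [div_self]; exact_mod_cast hm.ne'
  rw [this, one_mul]
  exact key
end

section
/- Let B̂ be a finite set of pixels and let P ⊆ Q be finite sets of pixels with B̂ ∪ P nonempty. Then, as real numbers, |Q| / |B̂ ∪ Q| ≥ |P| / |B̂ ∪ P|. Consequently, for any nonempty finite mask M, the quantity GmaIoU(B̂, P, M) = (|P| / |M|) · (|B̂ ∩ M| / |B̂ ∪ P|) is monotonically non-decreasing in the polygon P with respect to set inclusion. -/
open Finset

/-- If `P ⊆ Q` and `B̂ ∪ P` is nonempty, then `|Q| / |B̂ ∪ Q| ≥ |P| / |B̂ ∪ P|`;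
consequently `GmaIoU B̂ P M` is monotonically non-decreasing in the polygon `P`. -/
theorem ratio_mono_in_polygon (Bhat P Q : Finset (ℤ × ℤ))
    (hPQ : P ⊆ Q) (hne : (Bhat ∪ P).Nonempty) :
    (Q.card : ℝ) / ((Bhat ∪ Q).card : ℝ) ≥ (P.card : ℝ) / ((Bhat ∪ P).card : ℝ) ∧
    ∀ M : Finset (ℤ × ℤ), M.Nonempty → GmaIoU Bhat Q M ≥ GmaIoU Bhat P M := by
  have hPBP : (Bhat ∪ P) ⊆ (Bhat ∪ Q) := union_subset_union_right hPQ
  have hpos : (0 : ℝ) < ((Bhat ∪ P).card : ℝ) := by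
    exact_mod_cast card_pos.mpr hne
  have hposQ : (0 : ℝ) < ((Bhat ∪ Q).card : ℝ) := by
    exact_mod_cast card_pos.mpr (hne.mono hPBP)
  have hsub : (Bhat ∪ Q) ⊆ (Bhat ∪ P) ∪ (Q \ P) := by
    intro x hx
    rcases mem_union.mp hx with h | h
    · exact mem_union_left _ (mem_union_left _ h)
    · by_cases hp : x ∈ P
      · exact mem_union_left _ (mem_union_right _ hp)
      · exact mem_union_right _ (mem_sdiff.mpr ⟨h, hp⟩)
  have h1 : (Bhat ∪ Q).card ≤ (Bhat ∪ P).card + (Q \ P).card :=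
    le_trans (card_le_card hsub) (card_union_le _ _)
  have h2 : (Q \ P).card + P.card = Q.card := card_sdiff_add_card_eq_card hPQ
  have h3 : P.card ≤ (Bhat ∪ P).card := card_le_card (subset_union_right)
  have hN : P.card * (Bhat ∪ Q).card ≤ Q.card * (Bhat ∪ P).card := by nlinarith
  have hmain : (Q.card : ℝ) / ((Bhat ∪ Q).card : ℝ) ≥ (P.card : ℝ) / ((Bhat ∪ P).card : ℝ) := by
    rw [ge_iff_le, div_le_div_iff₀ hpos hposQ]
    exact_mod_cast hN
  refine ⟨hmain, fun M _ => ?_⟩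
  unfold GmaIoU
  have hrw : ∀ R : Finset (ℤ × ℤ),
      ((R.card : ℝ) / (M.card : ℝ)) * (((Bhat ∩ M).card : ℝ) / ((Bhat ∪ R).card : ℝ))
      = (((Bhat ∩ M).card : ℝ) / (M.card : ℝ)) * ((R.card : ℝ) / ((Bhat ∪ R).card : ℝ)) := by
    intro R; ring
  rw [hrw, hrw]
  apply mul_le_mul_of_nonneg_left hmain
  positivity
end

section
/- Let B̂, B, M be finite sets of pixels with M ⊆ B. Then |B| · |B̂ ∪ M| ≥ |M| · |B̂ ∪ B|, where |·| denotes cardinality (an inequality of natural numbers). -/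
open Finset

/-- Division-free reformulation of Corollary 1: if `M ⊆ B` then
`|B| · |B̂ ∪ M| ≥ |M| · |B̂ ∪ B|`, as natural numbers. -/
theorem card_mul_union_ge (Bhat B M : Finset (ℤ × ℤ)) (hMB : M ⊆ B) :
    B.card * (Bhat ∪ M).card ≥ M.card * (Bhat ∪ B).card := by
  have hsub : Bhat ∪ B ⊆ (Bhat ∪ M) ∪ (B \ M) := by
    intro x hx
    simp only [mem_union, mem_sdiff] at *
    tauto
  have h1 : (Bhat ∪ B).card ≤ (Bhat ∪ M).card + (B \ M).card :=
    le_trans (card_le_card hsub) (card_union_le _ _)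
  have h2 : B.card = M.card + (B \ M).card := by
    have := card_le_card hMB
    rw [card_sdiff_of_subset hMB]
    omega
  have h3 : M.card ≤ (Bhat ∪ M).card := card_le_card subset_union_right
  nlinarith [h1, h2, h3]
end

section
/- Let B̂, B, M be finite sets of pixels with M ⊆ B, M nonempty, and suppose there exists a pixel x with x ∈ B̂, x ∈ B, and x ∉ M, and additionally B̂ ∩ M is nonempty. Then the inequality of Corollary 1 is strict: GmaIoU(B̂, B, M) > GmaIoU(B̂, M, M), i.e., (|B| / |M|) · (|B̂ ∩ M| / |B̂ ∪ B|) > |B̂ ∩ M| / |B̂ ∪ M|. -/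
open Finset

/-- Strict version of Corollary 1: if there is a pixel of `B \ M` inside `B̂` and
`B̂ ∩ M` is nonempty, then `GmaIoU(B̂, B, M) > GmaIoU(B̂, M, M)`. -/
theorem gmaIoU_box_gt_gmaIoU_mask (Bhat B M : Finset (ℤ × ℤ))
    (hMB : M ⊆ B) (hM : M.Nonempty)
    (hx : ∃ x : ℤ × ℤ, x ∈ Bhat ∧ x ∈ B ∧ x ∉ M)
    (hBM : (Bhat ∩ M).Nonempty) :
    GmaIoU Bhat B M > GmaIoU Bhat M M ∧
    ((B.card : ℝ) / (M.card : ℝ)) * (((Bhat ∩ M).card : ℝ) / ((Bhat ∪ B).card : ℝ)) >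
      ((Bhat ∩ M).card : ℝ) / ((Bhat ∪ M).card : ℝ) := by
  obtain ⟨x, hxB, hxBB, hxM⟩ := hx
  -- Integer-level facts
  set c := (Bhat ∩ M).card
  set m := M.card
  set v := (Bhat ∪ M).card
  set u := (Bhat ∪ B).card
  have hc : 0 < c := card_pos.mpr hBM
  have hm : 0 < m := card_pos.mpr hM
  have hmv : m ≤ v := card_le_card (subset_union_right)
  -- decomposition: Bhat ∪ B = (Bhat ∪ M) ∪ (B \ (Bhat ∪ M)), disjoint
  have hdecomp : Bhat ∪ B = (Bhat ∪ M) ∪ (B \ (Bhat ∪ M)) := by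
    ext y
    simp only [mem_union, mem_sdiff]
    constructor
    · rintro (h | h)
      · exact Or.inl (Or.inl h)
      · by_cases hy : y ∈ Bhat ∪ M
        · simp only [mem_union] at hy; tauto
        · exact Or.inr ⟨h, by simpa [mem_union] using hy⟩
    · rintro ((h | h) | ⟨h, _⟩)
      · exact Or.inl h
      · exact Or.inr (hMB h)
      · exact Or.inr h
  have hdisj : Disjoint (Bhat ∪ M) (B \ (Bhat ∪ M)) := disjoint_sdiff
  have hu : u = v + (B \ (Bhat ∪ M)).card := by
    rw [show u = (Bhat ∪ B).card from rfl, hdecomp, card_union_of_disjoint hdisj]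
  set e := (B \ (Bhat ∪ M)).card
  -- e < |B \ M| =: d, since x ∈ B \ M but x ∉ B \ (Bhat ∪ M)
  set d := (B \ M).card
  have hed : e < d := by
    apply card_lt_card
    constructor
    · intro y hy
      rw [mem_sdiff] at hy ⊢
      exact ⟨hy.1, fun h => hy.2 (mem_union_right _ h)⟩
    · intro hsub
      have : x ∈ B \ (Bhat ∪ M) := hsub (mem_sdiff.mpr ⟨hxBB, hxM⟩)
      rw [mem_sdiff, mem_union] at this
      exact this.2 (Or.inl hxB)
  have ha : B.card = m + d := by
    rw [show d = (B \ M).card from rfl, show m = M.card from rfl]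
    have := card_le_card hMB
    rw [card_sdiff_of_subset hMB]
    omega
  -- key integer inequality
  have hkey : m * u < B.card * v := by
    rw [hu, ha]
    nlinarith
  -- positivity
  have hu0 : 0 < u := by
    have : 0 < B.card := lt_of_lt_of_le hm (card_le_card hMB)
    exact lt_of_lt_of_le this (card_le_card subset_union_right)
  have hv0 : 0 < v := lt_of_lt_of_le hm hmv
  have hcR : (0:ℝ) < c := by exact_mod_cast hc
  have hmR : (0:ℝ) < m := by exact_mod_cast hm
  have huR : (0:ℝ) < u := by exact_mod_cast hu0
  have hvR : (0:ℝ) < v := by exact_mod_cast hv0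
  have hkeyR : (m:ℝ) * u < (B.card:ℝ) * v := by exact_mod_cast hkey
  have main : ((B.card : ℝ) / (m : ℝ)) * ((c : ℝ) / (u : ℝ)) > (c : ℝ) / (v : ℝ) := by
    rw [div_mul_div_comm, gt_iff_lt, div_lt_div_iff₀ hvR (by positivity)]
    nlinarith
  refine ⟨?_, main⟩
  have : GmaIoU Bhat M M = (c : ℝ) / (v : ℝ) := by
    unfold GmaIoU
    rw [div_self (by positivity : (m:ℝ) ≠ 0), one_mul]
  rw [this]
  exact main
end
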